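/- arXiv:2310.16254 — 3 statements merged into one kernel-verified Lean document; each statement's English description precedes it below -/
import Mathlib

section
/- Let K be a closed convex cone in a real Hilbert space H with vertex at v. For every y ∈ K with y ≠ v and every u = v + t(y - v) with t > 0, one has P_K^{-1}(u) = u - y + P_K^{-1}(y). -/
/-!
For a convex set `K`, `P x = w` iff `x - w` lies in the normal cone of `K` at `w`, so
`P⁻¹(w) = w + N_K(w)`. For a cone with vertex `v`, testing the normal-cone inequality at the
two points `v` and `v + 2s(y - v)` of the ray through `y` shows that the normal cone at
`v + s(y - v)`, `s > 0`, is `{d ∈ N_K(v) | ⟪d, y - v⟫ = 0}`, independently of `s`.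
Hence `N_K(u) = N_K(y)` and the fibres over `u` and `y` are translates of each other.
-/

open scoped RealInnerProductSpace
open Set

section NormalCone

variable {H : Type*} [NormedAddCommGroup H] [InnerProductSpace ℝ H]

def normalCone (K : Set H) (w : H) : Set H := {d | ∀ z ∈ K, ⟪d, z - w⟫ ≤ 0}

theorem sub_mem_normalCone_of_forall_norm_sub_le {K : Set H} (hK : Convex ℝ K) {x w : H}
    (hw : w ∈ K) (hmin : ∀ z ∈ K, ‖x - w‖ ≤ ‖x - z‖) : x - w ∈ normalCone K w := by
  have : Nonempty K := ⟨⟨w, hw⟩⟩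
  refine (norm_eq_iInf_iff_real_inner_le_zero hK hw).1 (le_antisymm ?_ ?_)
  · exact le_ciInf fun z => hmin z z.2
  · exact ciInf_le ⟨0, forall_mem_range.2 fun z : K => norm_nonneg (x - z)⟩ ⟨w, hw⟩

theorem eq_of_sub_mem_normalCone {K : Set H} {x w w' : H} (hw : w ∈ K) (hw' : w' ∈ K)
    (h : x - w ∈ normalCone K w) (h' : x - w' ∈ normalCone K w') : w = w' := by
  have hsum : ⟪x - w, w' - w⟫ + ⟪x - w', w - w'⟫ = ‖w' - w‖ ^ 2 := by
    rw [← real_inner_self_eq_norm_sq, ← neg_sub w' w, inner_neg_right, ← sub_eq_add_neg,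
      ← inner_sub_left]
    congr 1; abel
  have hle : ‖w' - w‖ ^ 2 ≤ 0 := hsum ▸ add_nonpos (h w' hw') (h' w hw)
  rw [eq_comm, ← sub_eq_zero, ← norm_eq_zero]
  exact pow_eq_zero_iff two_ne_zero |>.1 (le_antisymm hle (sq_nonneg _))

theorem eq_iff_sub_mem_normalCone {K : Set H} (hK : Convex ℝ K) {P : H → H}
    (hP : ∀ x, P x ∈ K ∧ ∀ z ∈ K, ‖x - P x‖ ≤ ‖x - z‖) {x w : H} (hw : w ∈ K) :
    P x = w ↔ x - w ∈ normalCone K w := by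
  have hPx := sub_mem_normalCone_of_forall_norm_sub_le hK (hP x).1 (hP x).2
  exact ⟨(· ▸ hPx), fun h => eq_of_sub_mem_normalCone (hP x).1 hw hPx h⟩

theorem normalCone_ray {K : Set H} {v y : H}
    (hcone : ∀ k ∈ K, ∀ s : ℝ, 0 ≤ s → v + s • (k - v) ∈ K) (hy : y ∈ K) {s : ℝ} (hs : 0 < s) :
    normalCone K (v + s • (y - v)) = {d | ⟪d, y - v⟫ = 0} ∩ normalCone K v := by
  have hsplit : ∀ d z, ⟪d, z - (v + s • (y - v))⟫ = ⟪d, z - v⟫ - s * ⟪d, y - v⟫ := by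
    intro d z
    rw [sub_add_eq_sub_sub, inner_sub_right, real_inner_smul_right]
  ext d
  simp only [normalCone, mem_inter_iff, mem_ofPred_eq, hsplit]
  constructor
  · intro h
    have hv : v ∈ K := by simpa using hcone y hy 0 le_rfl
    have hfar := h _ (hcone y hy (2 * s) (by positivity))
    simp only [add_sub_cancel_left, real_inner_smul_right] at hfar
    have hzero : ⟪d, y - v⟫ = 0 := by
      have hnear := h v hv
      rw [sub_self, inner_zero_right] at hnear
      nlinarith
    exact ⟨hzero, fun z hz => by simpa [hzero] using h z hz⟩
  · rintro ⟨hzero, h⟩ z hz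
    simpa [hzero] using h z hz

theorem normalCone_ray_eq {K : Set H} {v y : H}
    (hcone : ∀ k ∈ K, ∀ s : ℝ, 0 ≤ s → v + s • (k - v) ∈ K) (hy : y ∈ K) {s : ℝ} (hs : 0 < s) :
    normalCone K (v + s • (y - v)) = normalCone K y := by
  rw [normalCone_ray hcone hy hs, ← normalCone_ray hcone hy one_pos, one_smul, add_sub_cancel]

end NormalCone

theorem stmt6_general {H : Type*} [NormedAddCommGroup H] [InnerProductSpace ℝ H]
    (K : Set H) (v : H) (hconv : Convex ℝ K)
    (hcone : ∀ k ∈ K, ∀ s : ℝ, 0 ≤ s → v + s • (k - v) ∈ K)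
    (P : H → H) (hP : ∀ x, P x ∈ K ∧ ∀ z ∈ K, ‖x - P x‖ ≤ ‖x - z‖)
    (y : H) (hy : y ∈ K) (t : ℝ) (ht : 0 < t)
    (u : H) (hu : u = v + t • (y - v)) :
    {x : H | P x = u} = (fun z => u - y + z) '' {x : H | P x = y} := by
  have huK : u ∈ K := hu ▸ hcone y hy t ht.le
  have hN : normalCone K u = normalCone K y := hu ▸ normalCone_ray_eq hcone hy ht
  ext x
  rw [image_add_left, mem_preimage, mem_ofPred_eq, mem_ofPred_eq,
    eq_iff_sub_mem_normalCone hconv hP huK, eq_iff_sub_mem_normalCone hconv hP hy, hN,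
    show -(u - y) + x - y = x - u by abel]

theorem stmt6 {H : Type*} [NormedAddCommGroup H] [InnerProductSpace ℝ H] [CompleteSpace H]
    (K : Set H) (v : H) (hv : v ∈ K) (hcl : IsClosed K) (hconv : Convex ℝ K)
    (hcone : ∀ k ∈ K, ∀ s : ℝ, 0 ≤ s → v + s • (k - v) ∈ K)
    (P : H → H) (hP : ∀ x, P x ∈ K ∧ ∀ z ∈ K, ‖x - P x‖ ≤ ‖x - z‖)
    (y : H) (hy : y ∈ K) (hyv : y ≠ v) (t : ℝ) (ht : 0 < t)
    (u : H) (hu : u = v + t • (y - v)) :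
    {x : H | P x = u} = (fun z => u - y + z) '' {x : H | P x = y} :=
  stmt6_general K v hconv hcone P hP y hy t ht u hu
end

section
/- Let C be a nonempty closed convex subset of a real Hilbert space H. For every x ∈ H \ C, the directional derivative of P_C at x along the direction x - P_C(x) exists and equals 0; likewise the directional derivative at x along P_C(x) - x exists and equals 0. -/
/-! A nearest point `p` of `x` in a convex set `C` is characterised by the variational inequality
`⟪x - p, z - p⟫ ≤ 0` for all `z ∈ C`, which is invariant under replacing `x - p` by a nonnegative
multiple of it. Hence every point `p + c • (x - p)` with `c ≥ 0` projects to `p`. For small `t > 0`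
both `x + t • (x - p)` and `x + t • (p - x)` lie on this ray, so the difference quotients vanish
identically near `0`. -/

open scoped RealInnerProductSpace Topology
open Filter Set MeasureTheory

section NearestPoint

variable {H : Type*} [NormedAddCommGroup H] [InnerProductSpace ℝ H] {C : Set H}

theorem real_inner_sub_le_zero_of_isNearest (hconv : Convex ℝ C) {x p : H} (hp : p ∈ C)
    (hmin : ∀ z ∈ C, ‖x - p‖ ≤ ‖x - z‖) : ∀ z ∈ C, ⟪x - p, z - p⟫ ≤ 0 := by
  have : Nonempty C := ⟨⟨p, hp⟩⟩
  refine (norm_eq_iInf_iff_real_inner_le_zero hconv hp).mp (le_antisymm ?_ ?_)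
  · exact le_ciInf fun z => hmin z z.2
  · exact ciInf_le ⟨0, fun _ ⟨_, h⟩ => h ▸ norm_nonneg _⟩ (⟨p, hp⟩ : C)

theorem eq_of_norm_sub_le_of_real_inner_le_zero {y q v : H}
    (hvar : ∀ z ∈ C, ⟪y - v, z - v⟫ ≤ 0) (hq : q ∈ C) (hle : ‖y - q‖ ≤ ‖y - v‖) : q = v := by
  have hexp : ‖y - q‖ ^ 2 = ‖y - v‖ ^ 2 - 2 * ⟪y - v, q - v⟫ + ‖q - v‖ ^ 2 := by
    rw [show y - q = (y - v) - (q - v) by abel, norm_sub_sq_real]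
  have hsq : ‖y - q‖ ^ 2 ≤ ‖y - v‖ ^ 2 := pow_le_pow_left₀ (norm_nonneg _) hle 2
  have : ‖q - v‖ ^ 2 ≤ 0 := by linarith [hvar q hq]
  rw [← sub_eq_zero, ← norm_eq_zero]
  exact pow_eq_zero_iff two_ne_zero |>.mp (le_antisymm this (sq_nonneg _))

theorem proj_add_smul_sub_proj (hconv : Convex ℝ C) (P : H → H)
    (hP : ∀ x, P x ∈ C ∧ ∀ z ∈ C, ‖x - P x‖ ≤ ‖x - z‖) (x : H) {c : ℝ} (hc : 0 ≤ c) :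
    P (P x + c • (x - P x)) = P x := by
  have hvar := real_inner_sub_le_zero_of_isNearest hconv (hP x).1 (hP x).2
  refine eq_of_norm_sub_le_of_real_inner_le_zero (fun z hz => ?_) (hP _).1 ((hP _).2 _ (hP x).1)
  rw [add_sub_cancel_left, real_inner_smul_left]
  exact mul_nonpos_of_nonneg_of_nonpos hc (hvar z hz)

end NearestPoint

theorem stmt7_general {H : Type*} [NormedAddCommGroup H] [InnerProductSpace ℝ H]
    (C : Set H) (hconv : Convex ℝ C)
    (P : H → H) (hP : ∀ x, P x ∈ C ∧ ∀ z ∈ C, ‖x - P x‖ ≤ ‖x - z‖)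
    (x : H) :
    Tendsto (fun t : ℝ => t⁻¹ • (P (x + t • (x - P x)) - P x)) (𝓝[>] (0 : ℝ)) (𝓝 0) ∧
    Tendsto (fun t : ℝ => t⁻¹ • (P (x + t • (P x - x)) - P x)) (𝓝[>] (0 : ℝ)) (𝓝 0) := by
  have hray {c : ℝ} (hc : 0 ≤ c) := proj_add_smul_sub_proj hconv P hP x hc
  constructor
  · refine tendsto_const_nhds.congr' ?_
    filter_upwards [self_mem_nhdsWithin] with t (ht : 0 < t)
    rw [show x + t • (x - P x) = P x + (1 + t) • (x - P x) by module, hray (by linarith),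
      sub_self, smul_zero]
  · refine tendsto_const_nhds.congr' ?_
    filter_upwards [Ioo_mem_nhdsGT (zero_lt_one' ℝ)] with t ht
    rw [show x + t • (P x - x) = P x + (1 - t) • (x - P x) by module, hray (by linarith [ht.2]),
      sub_self, smul_zero]

theorem stmt7 {H : Type*} [NormedAddCommGroup H] [InnerProductSpace ℝ H] [CompleteSpace H]
    (C : Set H) (hne : C.Nonempty) (hcl : IsClosed C) (hconv : Convex ℝ C)
    (P : H → H) (hP : ∀ x, P x ∈ C ∧ ∀ z ∈ C, ‖x - P x‖ ≤ ‖x - z‖)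
    (x : H) (hx : x ∉ C) :
    Tendsto (fun t : ℝ => t⁻¹ • (P (x + t • (x - P x)) - P x)) (𝓝[>] (0 : ℝ)) (𝓝 0) ∧
    Tendsto (fun t : ℝ => t⁻¹ • (P (x + t • (P x - x)) - P x)) (𝓝[>] (0 : ℝ)) (𝓝 0) :=
  stmt7_general C hconv P hP x
end

section
/- Let B(c,r) be a closed ball in a real Hilbert space H and x ∈ H with ‖x - c‖ > r. Then for every v ∈ H with v ≠ 0, the directional derivative of P_{B(c,r)} at x along v exists and equals (r/‖x - c‖³)(‖x - c‖² v − ⟨x - c, v⟩ (x - c)). -/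
/-!
Outside the ball, the nearest point is the radial point `c + r ‖y - c‖⁻¹ (y - c)`: it lies in the
ball, attains the lower bound `‖y - c‖ - r` given by the triangle inequality, and nearest points
in a convex set are unique by the variational inequality. The exterior of the ball is open, so `P`
agrees with this smooth map near `x`, and the directional derivative is its ordinary derivative
along the line `t ↦ x + t v`, computed from `(‖f‖⁻¹ f)' = ‖f‖⁻³ (‖f‖² f' - ⟪f, f'⟫ f)`.
-/

open scoped RealInnerProductSpace Topology
open Filter

section

variable {F : Type*} [NormedAddCommGroup F] [InnerProductSpace ℝ F]

theorem Convex.real_inner_sub_nonpos_of_forall_norm_sub_le {K : Set F} (hK : Convex ℝ K)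
    {y p : F} (hp : p ∈ K) (hmin : ∀ z ∈ K, ‖y - p‖ ≤ ‖y - z‖) :
    ∀ z ∈ K, ⟪y - p, z - p⟫ ≤ 0 := by
  have : Nonempty K := ⟨⟨p, hp⟩⟩
  refine (norm_eq_iInf_iff_real_inner_le_zero hK hp).mp (le_antisymm ?_ ?_)
  · exact le_ciInf fun z => hmin z z.2
  · exact ciInf_le ⟨0, by rintro _ ⟨z, rfl⟩; positivity⟩ (⟨p, hp⟩ : K)

theorem Convex.eq_of_forall_norm_sub_le {K : Set F} (hK : Convex ℝ K) {y p q : F}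
    (hp : p ∈ K) (hq : q ∈ K) (hpmin : ∀ z ∈ K, ‖y - p‖ ≤ ‖y - z‖)
    (hqmin : ∀ z ∈ K, ‖y - q‖ ≤ ‖y - z‖) : p = q := by
  have hpq := hK.real_inner_sub_nonpos_of_forall_norm_sub_le hp hpmin q hq
  have hqp := hK.real_inner_sub_nonpos_of_forall_norm_sub_le hq hqmin p hp
  have : ⟪p - q, p - q⟫ ≤ 0 := by
    have e : ⟪p - q, p - q⟫ = ⟪y - q, p - q⟫ + ⟪y - p, q - p⟫ := by
      simp only [inner_sub_left, inner_sub_right]; ring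
    linarith
  exact sub_eq_zero.mp (real_inner_self_nonpos.mp this)

noncomputable def radialRetraction (c : F) (r : ℝ) (y : F) : F :=
  c + r • (‖y - c‖⁻¹ • (y - c))

theorem norm_radialRetraction_sub {c : F} {r : ℝ} (hr : 0 ≤ r) {y : F} (hy : y ≠ c) :
    ‖radialRetraction c r y - c‖ = r := by
  have : ‖y - c‖ ≠ 0 := norm_ne_zero_iff.mpr (sub_ne_zero.mpr hy)
  rw [radialRetraction, add_sub_cancel_left, norm_smul, norm_smul, norm_inv, norm_norm,
    inv_mul_cancel₀ this, mul_one, Real.norm_of_nonneg hr]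

theorem norm_sub_radialRetraction {c : F} {r : ℝ} {y : F} (hy : r ≤ ‖y - c‖) (hyc : y ≠ c) :
    ‖y - radialRetraction c r y‖ = ‖y - c‖ - r := by
  have hd : 0 < ‖y - c‖ := norm_pos_iff.mpr (sub_ne_zero.mpr hyc)
  have e : y - radialRetraction c r y = (1 - r / ‖y - c‖) • (y - c) := by
    rw [radialRetraction, smul_smul, sub_smul, one_smul, div_eq_mul_inv]; abel
  rw [e, norm_smul, Real.norm_of_nonneg (by rw [sub_nonneg, div_le_one hd]; exact hy)]
  field_simp

theorem eq_radialRetraction_of_forall_norm_sub_le {c y p : F} {r : ℝ} (hy : r < ‖y - c‖)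
    (hp : p ∈ Metric.closedBall c r)
    (hmin : ∀ z ∈ Metric.closedBall c r, ‖y - p‖ ≤ ‖y - z‖) :
    p = radialRetraction c r y := by
  have hr : 0 ≤ r := Metric.nonempty_closedBall.mp ⟨p, hp⟩
  have hyc : y ≠ c := fun h => by simp [h] at hy; linarith
  refine (convex_closedBall c r).eq_of_forall_norm_sub_le hp ?_ hmin fun z hz => ?_
  · rw [mem_closedBall_iff_norm, norm_radialRetraction_sub hr hyc]
  · rw [norm_sub_radialRetraction hy.le hyc]
    calc ‖y - c‖ - r ≤ ‖y - c‖ - ‖z - c‖ := by gcongr; exact mem_closedBall_iff_norm.mp hz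
      _ ≤ ‖y - c - (z - c)‖ := norm_sub_norm_le _ _
      _ = ‖y - z‖ := by rw [sub_sub_sub_cancel_right]

theorem HasDerivAt.norm {f : ℝ → F} {f' : F} {t : ℝ} (hf : HasDerivAt f f' t) (h0 : f t ≠ 0) :
    HasDerivAt (fun s => ‖f s‖) (⟪f t, f'⟫ / ‖f t‖) t := by
  have h := hf.norm_sq.sqrt (by positivity)
  simp only [Real.sqrt_sq (norm_nonneg _)] at h
  convert h using 1
  ring

theorem HasDerivAt.norm_inv_smul {f : ℝ → F} {f' : F} {t : ℝ} (hf : HasDerivAt f f' t)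
    (h0 : f t ≠ 0) :
    HasDerivAt (fun s => ‖f s‖⁻¹ • f s) ((‖f t‖ ^ 3)⁻¹ • (‖f t‖ ^ 2 • f' - ⟪f t, f'⟫ • f t)) t := by
  have hn : ‖f t‖ ≠ 0 := norm_ne_zero_iff.mpr h0
  refine (((hf.norm h0).inv hn).smul hf).congr_deriv ?_
  simp only [Pi.inv_apply]
  match_scalars <;> field_simp

theorem hasDerivAt_radialRetraction_add_smul (c : F) (r : ℝ) {x : F} (hx : x ≠ c) (v : F) :
    HasDerivAt (fun t : ℝ => radialRetraction c r (x + t • v))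
      ((r / ‖x - c‖ ^ 3) • (‖x - c‖ ^ 2 • v - ⟪x - c, v⟫ • (x - c))) 0 := by
  have hline : HasDerivAt (fun t : ℝ => x + t • v - c) v 0 := by
    simpa using (((hasDerivAt_id (0 : ℝ)).smul_const v).const_add x).sub_const c
  have h := ((hline.norm_inv_smul (by simpa [sub_eq_zero] using hx)).const_smul r).const_add c
  simp only [zero_smul, add_zero, smul_smul, ← div_eq_mul_inv] at h
  exact h

end

theorem stmt13_general {H : Type*} [NormedAddCommGroup H] [InnerProductSpace ℝ H]
    (c : H) (r : ℝ)
    (P : H → H)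
    (hP : ∀ x, P x ∈ Metric.closedBall c r ∧ ∀ z ∈ Metric.closedBall c r, ‖x - P x‖ ≤ ‖x - z‖)
    (x : H) (hx : r < ‖x - c‖) (v : H) :
    Tendsto (fun t : ℝ => t⁻¹ • (P (x + t • v) - P x)) (𝓝[>] (0 : ℝ))
      (𝓝 ((r / ‖x - c‖ ^ 3) • (‖x - c‖ ^ 2 • v - ⟪x - c, v⟫ • (x - c)))) := by
  have hr : 0 ≤ r := Metric.nonempty_closedBall.mp ⟨_, (hP x).1⟩
  have hxc : x ≠ c := by rintro rfl; simp at hx; linarith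
  have hP_eq : P =ᶠ[𝓝 x] radialRetraction c r := by
    have hnear : ∀ᶠ y in 𝓝 x, r < ‖y - c‖ :=
      ((continuous_id.sub continuous_const).norm.tendsto x).eventually_const_lt hx
    filter_upwards [hnear] with y hy
    exact eq_radialRetraction_of_forall_norm_sub_le hy (hP y).1 (hP y).2
  have hline : Tendsto (fun t : ℝ => x + t • v) (𝓝 0) (𝓝 x) := by
    simpa using (show Continuous fun t : ℝ => x + t • v by fun_prop).tendsto 0
  have hderiv := (hasDerivAt_radialRetraction_add_smul c r hxc v).congr_of_eventuallyEq
    (hP_eq.comp_tendsto hline)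
  simpa using hderiv.tendsto_slope_zero_right

theorem stmt13 {H : Type*} [NormedAddCommGroup H] [InnerProductSpace ℝ H] [CompleteSpace H]
    (c : H) (r : ℝ) (hr : 0 < r)
    (P : H → H)
    (hP : ∀ x, P x ∈ Metric.closedBall c r ∧ ∀ z ∈ Metric.closedBall c r, ‖x - P x‖ ≤ ‖x - z‖)
    (x : H) (hx : r < ‖x - c‖) (v : H) (hv : v ≠ 0) :
    Tendsto (fun t : ℝ => t⁻¹ • (P (x + t • v) - P x)) (𝓝[>] (0 : ℝ))
      (𝓝 ((r / ‖x - c‖ ^ 3) • (‖x - c‖ ^ 2 • v - ⟪x - c, v⟫ • (x - c)))) :=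
  stmt13_general c r P hP x hx v
end
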